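/- arXiv:1004.4010 — 3 statements merged into one kernel-verified Lean document; each statement's English description precedes it below -/
import Mathlib

section
/- Let D be a class in standard form, i.e. D = dH − Σ_{i=1}^r m_iE_i with d ≥ m_1 ≥ m_2 ≥ … ≥ m_r ≥ 0 and (n−1)d ≥ m_1 + … + m_{n+1}. Then ⟨D, w(E_j)⟩ ≥ 0 for every element w of the group W and every index j ∈ {1, …, r}. (This is Theorem 4.4: a class in standard form has non-negative intersection with w(E) for every (−1)-class E and every w ∈ W, the (−1)-classes being exactly the W-orbit of the E_j's.) -/
/-!
The simple roots `F, F_1, …, F_{r-1}` have square `-2` and pairwise products `0` or `1`, so `W`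
is a simply laced reflection group and the classical positivity argument applies: if
`ℓ(w s_α) > ℓ(w)` then `w α` is a non-negative combination of simple roots. This goes by induction
on `ℓ(w)`, using the parity `ℓ(w s_α) = ℓ(w) ± 1` (from `det s_α = -1`) and the commutation and
braid relations. Consequently `w v - v` lies in that cone whenever `v` pairs non-negatively with
every simple root. The last exceptional class is such a `v`, every `E_j` lies in its orbit
(`s_{F_j} E_{j+1} = E_j`), and a class `D` in standard form pairs non-negatively with the simple
roots and with `E_r`, so `⟨D, w E_r⟩ = ⟨D, E_r⟩ + ⟨D, w E_r - E_r⟩ ≥ 0`.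
-/

open BigOperators Finset

/-- The lattice `L = ℤ^{1+r}`: coordinates with respect to the basis `H, E₁, …, E_r`. -/
abbrev PicL (r : ℕ) := Fin (r + 1) → ℤ

/-- `cls r d m` is the class `d·H - ∑ᵢ mᵢ·Eᵢ`. -/
def cls (r : ℕ) (d : ℤ) (m : Fin r → ℤ) : PicL r :=
  Fin.cases d (fun i => -(m i))

/-- The bilinear form determined by `⟨H,H⟩ = n-1`, `⟨Eᵢ,Eᵢ⟩ = -1`,
`⟨H,Eᵢ⟩ = ⟨Eᵢ,E_j⟩ = 0` for `i ≠ j`. -/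
def bil (n r : ℕ) (x y : PicL r) : ℤ :=
  ((n : ℤ) - 1) * x 0 * y 0 - ∑ i : Fin r, x i.succ * y i.succ

/-- The exceptional class `E_j`. -/
def Ecl (r : ℕ) (j : Fin r) : PicL r := cls r 0 (fun i => if i = j then -1 else 0)

/-- `F = H - E₁ - ⋯ - E_{n+1}`. -/
def Fcl (n r : ℕ) : PicL r := cls r 1 (fun i => if (i : ℕ) < n + 1 then 1 else 0)

/-- `F_k = E_k - E_{k+1}` (zero-based index `k`). -/
def Fdiff (r k : ℕ) : PicL r :=
  cls r 0 (fun i => if (i : ℕ) = k then -1 else if (i : ℕ) = k + 1 then 1 else 0)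

/-- The reflection `σ_R(D) = D + ⟨D,R⟩·R`. -/
def reflect (n r : ℕ) (R D : PicL r) : PicL r := D + bil n r D R • R

/-- The Weyl group `W`: subgroup of the `ℤ`-linear automorphisms of `L` generated by
`σ_F` and the `σ_{F_k}`, `1 ≤ k ≤ r-1`. -/
def Wgrp (n r : ℕ) : Subgroup ((PicL r) ≃ₗ[ℤ] (PicL r)) :=
  Subgroup.closure
    {w | (∀ D, w D = reflect n r (Fcl n r) D) ∨
         ∃ k, k + 1 < r ∧ ∀ D, w D = reflect n r (Fdiff r k) D}

theorem LinearMap.det_id_add_smulRight {R M : Type*} [CommRing R] [AddCommGroup M] [Module R M]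
    [Module.Free R M] [Module.Finite R M] (f : Module.Dual R M) (x : M) :
    LinearMap.det (LinearMap.id + f.smulRight x) = 1 + f x := by
  classical
  let b := Module.Free.chooseBasis R M
  have hM : LinearMap.toMatrix b b (LinearMap.id + f.smulRight x)
      = 1 + Matrix.replicateCol Unit (b.repr x) * Matrix.replicateRow Unit (fun j => f (b j)) := by
    ext i j
    simp [LinearMap.toMatrix_apply, Matrix.one_apply, Matrix.mul_apply, Finsupp.single_apply,
      eq_comm, mul_comm]
  rw [← LinearMap.det_toMatrix b, hM, Matrix.det_one_add_replicateCol_mul_replicateRow]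
  conv_rhs => rw [← b.sum_repr x, map_sum]
  simp [dotProduct, mul_comm]

namespace LinearMap.BilinForm

variable {V : Type*} [AddCommGroup V] (B : LinearMap.BilinForm ℤ V)

def rootReflection (α : V) : Module.End ℤ V :=
  LinearMap.id + (B.flip α).smulRight α

@[simp]
lemma rootReflection_apply (α x : V) : B.rootReflection α x = x + B x α • α := rfl

variable {B}

lemma rootReflection_mul_self {α : V} (hα : B α α = -2) :
    B.rootReflection α * B.rootReflection α = 1 := by
  ext x
  simp only [Module.End.mul_apply, rootReflection_apply, map_add, map_smul, hα,
    Module.End.one_apply]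
  module

lemma det_rootReflection [Module.Free ℤ V] [Module.Finite ℤ V] {α : V} (hα : B α α = -2) :
    LinearMap.det (B.rootReflection α) = -1 := by
  rw [rootReflection, LinearMap.det_id_add_smulRight, flip_apply, hα]
  norm_num

lemma rootReflection_commute {α β : V} (hαβ : B α β = 0) (hβα : B β α = 0) :
    B.rootReflection α * B.rootReflection β = B.rootReflection β * B.rootReflection α := by
  ext x
  simp only [Module.End.mul_apply, rootReflection_apply, map_add, map_smul, hαβ, hβα]
  module

lemma rootReflection_braid {α β : V} (hα : B α α = -2) (hβ : B β β = -2)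
    (hαβ : B α β = 1) (hβα : B β α = 1) :
    B.rootReflection α * B.rootReflection β * B.rootReflection α =
      B.rootReflection β * B.rootReflection α * B.rootReflection β := by
  ext x
  simp only [Module.End.mul_apply, rootReflection_apply, map_add, map_smul, hα, hβ, hαβ, hβα]
  module

lemma rootReflection_add {α β : V} (hα : B α α = -2) (hβα : B β α = 1) :
    B.rootReflection α (α + β) = β := by
  simp only [rootReflection_apply, map_add, hα, hβα]
  module

variable (B) in
/-- Simple roots of a simply laced reflection group (`m_{αβ} ∈ {2, 3}`), in the convention
`⟨α, α⟩ = -2`. -/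
structure IsSimplyLacedBase (S : Set V) : Prop where
  isSymm : B.IsSymm
  apply_self : ∀ α ∈ S, B α α = -2
  apply_eq_zero_or_one : ∀ α ∈ S, ∀ β ∈ S, α ≠ β → B α β = 0 ∨ B α β = 1

variable (B) in
def reflectionMonoid (S : Set V) : Submonoid (Module.End ℤ V) :=
  Submonoid.closure (B.rootReflection '' S)

variable (B) in
noncomputable def reflectionLength (S : Set V) (w : Module.End ℤ V) : ℕ :=
  sInf {k | ∃ l : List V, (∀ α ∈ l, α ∈ S) ∧ l.length = k ∧ (l.map B.rootReflection).prod = w}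

variable {S : Set V} {w : Module.End ℤ V} {α : V}

lemma mem_reflectionMonoid_iff :
    w ∈ B.reflectionMonoid S ↔
      ∃ l : List V, (∀ α ∈ l, α ∈ S) ∧ (l.map B.rootReflection).prod = w := by
  constructor
  · intro hw
    induction hw using Submonoid.closure_induction with
    | mem _ h =>
      obtain ⟨α, hα, rfl⟩ := h
      exact ⟨[α], by simpa using hα, by simp⟩
    | one => exact ⟨[], by simp, rfl⟩
    | mul _ _ _ _ ih₁ ih₂ =>
      obtain ⟨l₁, hl₁, rfl⟩ := ih₁
      obtain ⟨l₂, hl₂, rfl⟩ := ih₂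
      exact ⟨l₁ ++ l₂, fun α hα => (List.mem_append.mp hα).elim (hl₁ α) (hl₂ α), by simp⟩
  · rintro ⟨l, hl, rfl⟩
    refine Submonoid.list_prod_mem _ fun x hx => ?_
    obtain ⟨α, hα, rfl⟩ := List.mem_map.mp hx
    exact Submonoid.subset_closure ⟨α, hl α hα, rfl⟩

lemma rootReflection_mem_reflectionMonoid (hα : α ∈ S) :
    B.rootReflection α ∈ B.reflectionMonoid S :=
  Submonoid.subset_closure ⟨α, hα, rfl⟩

lemma reflectionLength_le {l : List V} (hl : ∀ α ∈ l, α ∈ S)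
    (hw : (l.map B.rootReflection).prod = w) : B.reflectionLength S w ≤ l.length :=
  Nat.sInf_le ⟨l, hl, rfl, hw⟩

lemma exists_word_of_reflectionLength (hw : w ∈ B.reflectionMonoid S) :
    ∃ l : List V, (∀ α ∈ l, α ∈ S) ∧ l.length = B.reflectionLength S w ∧
      (l.map B.rootReflection).prod = w := by
  obtain ⟨l, hl, rfl⟩ := mem_reflectionMonoid_iff.mp hw
  exact Nat.sInf_mem (s := {k | ∃ l' : List V, (∀ α ∈ l', α ∈ S) ∧ l'.length = k ∧
    (l'.map B.rootReflection).prod = (l.map B.rootReflection).prod}) ⟨_, l, hl, rfl, rfl⟩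

lemma eq_one_of_reflectionLength_eq_zero (hw : w ∈ B.reflectionMonoid S)
    (h : B.reflectionLength S w = 0) : w = 1 := by
  obtain ⟨l, -, hlen, rfl⟩ := exists_word_of_reflectionLength hw
  simp [List.length_eq_zero_iff.mp (hlen.trans h)]

lemma reflectionLength_mul_le (hw : w ∈ B.reflectionMonoid S) (hα : α ∈ S) :
    B.reflectionLength S (w * B.rootReflection α) ≤ B.reflectionLength S w + 1 := by
  obtain ⟨l, hl, hlen, rfl⟩ := exists_word_of_reflectionLength hw
  have hl' : ∀ β ∈ l ++ [α], β ∈ S := by simpa [or_imp, forall_and] using ⟨hl, hα⟩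
  simpa [hlen] using reflectionLength_le hl' (by simp)

lemma exists_eq_mul_of_reflectionLength_eq_succ {k : ℕ} (hw : w ∈ B.reflectionMonoid S)
    (h : B.reflectionLength S w = k + 1) :
    ∃ g ∈ B.reflectionMonoid S, ∃ β ∈ S,
      B.reflectionLength S g = k ∧ w = g * B.rootReflection β := by
  obtain ⟨l, hl, hlen, rfl⟩ := exists_word_of_reflectionLength hw
  obtain ⟨l', β, rfl⟩ := (List.eq_nil_or_concat l).resolve_left (by rintro rfl; simp_all)
  simp only [List.concat_eq_append, List.mem_append, List.mem_singleton, List.length_append,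
    List.length_singleton] at hl hlen h ⊢
  have hl' : ∀ α ∈ l', α ∈ S := fun α hα => hl α (.inl hα)
  have hβ : β ∈ S := hl β (.inr rfl)
  have hg : (l'.map B.rootReflection).prod ∈ B.reflectionMonoid S :=
    mem_reflectionMonoid_iff.mpr ⟨l', hl', rfl⟩
  have hw : ((l' ++ [β]).map B.rootReflection).prod =
      (l'.map B.rootReflection).prod * B.rootReflection β := by simp
  have h₁ := reflectionLength_le (B := B) hl' rfl
  have h₂ := reflectionLength_mul_le hg hβ
  rw [← hw] at h₂
  exact ⟨_, hg, β, hβ, by omega, hw⟩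

lemma det_eq_neg_one_pow_reflectionLength [Module.Free ℤ V] [Module.Finite ℤ V]
    (hS : ∀ α ∈ S, B α α = -2) (hw : w ∈ B.reflectionMonoid S) :
    LinearMap.det w = (-1) ^ B.reflectionLength S w := by
  obtain ⟨l, hl, hlen, rfl⟩ := exists_word_of_reflectionLength hw
  rw [← hlen]
  clear hw hlen
  induction l with
  | nil => simp
  | cons α l ih =>
    simp only [List.mem_cons, forall_eq_or_imp] at hl
    simp [det_rootReflection (hS α hl.1), ih hl.2, pow_succ, mul_comm]

lemma reflectionLength_mul_rootReflection [Module.Free ℤ V] [Module.Finite ℤ V]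
    (hS : ∀ α ∈ S, B α α = -2) (hw : w ∈ B.reflectionMonoid S) (hα : α ∈ S) :
    B.reflectionLength S (w * B.rootReflection α) = B.reflectionLength S w + 1 ∨
      B.reflectionLength S (w * B.rootReflection α) + 1 = B.reflectionLength S w := by
  have hwα := mul_mem hw (rootReflection_mem_reflectionMonoid (B := B) hα)
  have h₁ := reflectionLength_mul_le hw hα
  have h₂ := reflectionLength_mul_le hwα hα
  rw [mul_assoc, rootReflection_mul_self (hS α hα), mul_one] at h₂
  have hdet : LinearMap.det (w * B.rootReflection α) = -LinearMap.det w := by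
    rw [map_mul, det_rootReflection (hS α hα), mul_neg_one]
  rw [det_eq_neg_one_pow_reflectionLength hS hw, det_eq_neg_one_pow_reflectionLength hS hwα]
    at hdet
  have hne : B.reflectionLength S (w * B.rootReflection α) ≠ B.reflectionLength S w := by
    intro h
    rw [h] at hdet
    exact pow_ne_zero _ (by norm_num) (self_eq_neg.mp hdet)
  omega

lemma apply_mem_closure_of_apply_eq_zero (hS : IsSimplyLacedBase B S) {g : Module.End ℤ V}
    {β : V} (ih : ∀ v ∈ B.reflectionMonoid S, B.reflectionLength S v ≤ B.reflectionLength S g →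
      ∀ γ ∈ S, B.reflectionLength S v < B.reflectionLength S (v * B.rootReflection γ) →
        v γ ∈ AddSubmonoid.closure S)
    (hg : g ∈ B.reflectionMonoid S) (hα : α ∈ S) (hβ : β ∈ S) (hB : B α β = 0)
    (h : B.reflectionLength S (g * B.rootReflection β) <
      B.reflectionLength S (g * B.rootReflection β * B.rootReflection α))
    (hgβ : B.reflectionLength S (g * B.rootReflection β) = B.reflectionLength S g + 1) :
    (g * B.rootReflection β) α ∈ AddSubmonoid.closure S := by
  rw [Module.End.mul_apply, rootReflection_apply, hB, zero_smul, add_zero]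
  -- `s_α` commutes with `s_β`, so `ℓ(g s_α) + 1 ≥ ℓ(g s_β s_α) > ℓ(g s_β) = ℓ g + 1`
  rw [mul_assoc, ← rootReflection_commute hB (hS.isSymm.eq β α ▸ hB), ← mul_assoc] at h
  have := reflectionLength_mul_le (mul_mem hg (rootReflection_mem_reflectionMonoid hα)) hβ
  exact ih g hg le_rfl α hα (by omega)

lemma apply_nonneg_of_mem_closure {D y : V} (hD : ∀ α ∈ S, 0 ≤ B D α)
    (hy : y ∈ AddSubmonoid.closure S) : 0 ≤ B D y := by
  induction hy using AddSubmonoid.closure_induction with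
  | mem α hα => exact hD α hα
  | zero => simp
  | add _ _ _ _ h₁ h₂ => rw [map_add]; exact add_nonneg h₁ h₂

variable [Module.Free ℤ V] [Module.Finite ℤ V]

lemma apply_mem_closure_of_apply_eq_one (hS : IsSimplyLacedBase B S) {g : Module.End ℤ V}
    {β : V} (ih : ∀ v ∈ B.reflectionMonoid S, B.reflectionLength S v ≤ B.reflectionLength S g →
      ∀ γ ∈ S, B.reflectionLength S v < B.reflectionLength S (v * B.rootReflection γ) →
        v γ ∈ AddSubmonoid.closure S)
    (hg : g ∈ B.reflectionMonoid S) (hα : α ∈ S) (hβ : β ∈ S) (hB : B α β = 1)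
    (h : B.reflectionLength S (g * B.rootReflection β) <
      B.reflectionLength S (g * B.rootReflection β * B.rootReflection α))
    (hgβ : B.reflectionLength S (g * B.rootReflection β) = B.reflectionLength S g + 1) :
    (g * B.rootReflection β) α ∈ AddSubmonoid.closure S := by
  have hαα := hS.apply_self α hα
  have hB' : B β α = 1 := hS.isSymm.eq β α ▸ hB
  have hgα := mul_mem hg (rootReflection_mem_reflectionMonoid (B := B) hα)
  rw [Module.End.mul_apply, rootReflection_apply, hB, one_smul]
  rcases reflectionLength_mul_rootReflection hS.apply_self hg hα with hgα_len | hgα_len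
  · rw [map_add]
    exact add_mem (ih g hg le_rfl α hα (by omega)) (ih g hg le_rfl β hβ (by omega))
  -- Now `u = g s_α` is shorter than `g`, `g (α + β) = u β`, and by the braid relation
  -- `g s_β s_α = u s_β s_α s_β`, which forces `u s_β` to be longer than `u`.
  set u := g * B.rootReflection α with hu
  have hg_eq : g = u * B.rootReflection α := by
    rw [hu, mul_assoc, rootReflection_mul_self hαα, mul_one]
  have hbraid : g * B.rootReflection β * B.rootReflection α =
      u * B.rootReflection β * B.rootReflection α * B.rootReflection β := by
    rw [hg_eq, mul_assoc u, mul_assoc u,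
      rootReflection_braid hαα (hS.apply_self β hβ) hB hB']
    simp only [mul_assoc]
  have huβ := mul_mem hgα (rootReflection_mem_reflectionMonoid (B := B) hβ)
  have hu_len := reflectionLength_mul_rootReflection hS.apply_self hgα hβ
  have h₁ := reflectionLength_mul_le huβ hα
  have h₂ := reflectionLength_mul_le (mul_mem huβ (rootReflection_mem_reflectionMonoid hα)) hβ
  rw [← hbraid] at h₂
  rw [hg_eq, Module.End.mul_apply, rootReflection_add hαα hB']
  exact ih u hgα (by omega) β hβ (by omega)

theorem apply_mem_closure_of_reflectionLength_lt (hS : IsSimplyLacedBase B S)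
    (hw : w ∈ B.reflectionMonoid S) (hα : α ∈ S)
    (h : B.reflectionLength S w < B.reflectionLength S (w * B.rootReflection α)) :
    w α ∈ AddSubmonoid.closure S := by
  obtain ⟨k, hk⟩ : ∃ k, B.reflectionLength S w = k := ⟨_, rfl⟩
  induction k using Nat.strong_induction_on generalizing w α with
  | _ k ih =>
  rcases k with _ | k
  · rw [eq_one_of_reflectionLength_eq_zero hw hk]
    exact AddSubmonoid.subset_closure hα
  obtain ⟨g, hg, β, hβ, hgk, rfl⟩ := exists_eq_mul_of_reflectionLength_eq_succ hw hk
  have ih' : ∀ v ∈ B.reflectionMonoid S, B.reflectionLength S v ≤ B.reflectionLength S g →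
      ∀ γ ∈ S, B.reflectionLength S v < B.reflectionLength S (v * B.rootReflection γ) →
        v γ ∈ AddSubmonoid.closure S :=
    fun v hv hvg γ hγ hvγ => ih _ (by omega) hv hγ hvγ rfl
  have hαβ : α ≠ β := by
    rintro rfl
    rw [mul_assoc, rootReflection_mul_self (hS.apply_self α hα), mul_one] at h
    omega
  rcases hS.apply_eq_zero_or_one α hα β hβ hαβ with hB | hB
  · exact apply_mem_closure_of_apply_eq_zero hS ih' hg hα hβ hB h (by omega)
  · exact apply_mem_closure_of_apply_eq_one hS ih' hg hα hβ hB h (by omega)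

theorem apply_sub_self_mem_closure (hS : IsSimplyLacedBase B S) {v : V}
    (hv : ∀ α ∈ S, 0 ≤ B v α) (hw : w ∈ B.reflectionMonoid S) :
    w v - v ∈ AddSubmonoid.closure S := by
  obtain ⟨k, hk⟩ : ∃ k, B.reflectionLength S w = k := ⟨_, rfl⟩
  induction k generalizing w with
  | zero => simp [eq_one_of_reflectionLength_eq_zero hw hk]
  | succ k ih =>
    obtain ⟨g, hg, β, hβ, hgk, rfl⟩ := exists_eq_mul_of_reflectionLength_eq_succ hw hk
    have hgβ : g β ∈ AddSubmonoid.closure S :=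
      apply_mem_closure_of_reflectionLength_lt hS hg hβ (by omega)
    have hsplit : (g * B.rootReflection β) v - v = (g v - v) + (B v β).toNat • g β := by
      rw [Module.End.mul_apply, rootReflection_apply, map_add, map_smul, ← natCast_zsmul,
        Int.toNat_of_nonneg (hv β hβ)]
      abel
    rw [hsplit]
    exact add_mem (ih hg hgk) (AddSubmonoid.nsmul_mem _ hgβ _)

theorem apply_apply_nonneg (hS : IsSimplyLacedBase B S) {D v : V} (hD : ∀ α ∈ S, 0 ≤ B D α)
    (hv : ∀ α ∈ S, 0 ≤ B v α) (hDv : 0 ≤ B D v) (hw : w ∈ B.reflectionMonoid S) :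
    0 ≤ B D (w v) := by
  have := apply_nonneg_of_mem_closure hD (apply_sub_self_mem_closure hS hv hw)
  rw [map_sub] at this
  linarith

end LinearMap.BilinForm

namespace PicL

variable {n r : ℕ}

def bilForm (n r : ℕ) : LinearMap.BilinForm ℤ (PicL r) :=
  LinearMap.mk₂ ℤ (bil n r)
    (fun x y z => by simp only [bil, Pi.add_apply, add_mul, Finset.sum_add_distrib]; ring)
    (fun c x z => by
      simp only [bil, Pi.smul_apply, smul_eq_mul, mul_sub, Finset.mul_sum]
      congr 1 <;> [ring; exact Finset.sum_congr rfl fun i _ => by ring])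
    (fun x y z => by simp only [bil, Pi.add_apply, mul_add, Finset.sum_add_distrib]; ring)
    (fun c x z => by
      simp only [bil, Pi.smul_apply, smul_eq_mul, mul_sub, Finset.mul_sum]
      congr 1 <;> [ring; exact Finset.sum_congr rfl fun i _ => by ring])

lemma bilForm_apply (x y : PicL r) : bilForm n r x y = bil n r x y := rfl

lemma isSymm_bilForm : (bilForm n r).IsSymm :=
  ⟨fun x y => by simp only [bilForm_apply, bil]; simp only [mul_comm]; ring⟩

lemma bilForm_cls_cls (d d' : ℤ) (m m' : Fin r → ℤ) :
    bilForm n r (cls r d m) (cls r d' m') = ((n : ℤ) - 1) * d * d' - ∑ i, m i * m' i := by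
  simp [bilForm_apply, bil, cls]

lemma bilForm_cls_Ecl (d : ℤ) (m : Fin r → ℤ) (j : Fin r) :
    bilForm n r (cls r d m) (Ecl r j) = m j := by
  simp [Ecl, bilForm_cls_cls]

lemma bilForm_Ecl_Ecl (i j : Fin r) :
    bilForm n r (Ecl r i) (Ecl r j) = if i = j then -1 else 0 := by
  rw [Ecl, bilForm_cls_Ecl]
  simp only [eq_comm]

lemma bilForm_cls_Fcl (d : ℤ) (m : Fin r → ℤ) :
    bilForm n r (cls r d m) (Fcl n r) =
      ((n : ℤ) - 1) * d - ∑ i : Fin r, if (i : ℕ) < n + 1 then m i else 0 := by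
  simp [Fcl, bilForm_cls_cls]

lemma bilForm_Ecl_Fcl (j : Fin r) :
    bilForm n r (Ecl r j) (Fcl n r) = if (j : ℕ) < n + 1 then 1 else 0 := by
  rw [Ecl, bilForm_cls_Fcl, ← Finset.sum_filter]
  simp [Finset.sum_ite_eq', apply_ite]

lemma bilForm_Fcl_Fcl (hr : n + 1 ≤ r) : bilForm n r (Fcl n r) (Fcl n r) = -2 := by
  nth_rw 1 [Fcl]
  rw [bilForm_cls_Fcl, ← Finset.sum_filter,
    Finset.sum_ite_of_true fun i hi => (Finset.mem_filter.mp hi).2, Finset.sum_const,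
    Fin.card_filter_val_lt, min_eq_right hr]
  simp
  ring

lemma Fdiff_eq {k : ℕ} (hk : k + 1 < r) : Fdiff r k = Ecl r ⟨k, by omega⟩ - Ecl r ⟨k + 1, hk⟩ := by
  ext i
  induction i using Fin.cases with
  | zero => simp [Fdiff, Ecl, cls]
  | succ i =>
    simp only [Fdiff, Ecl, cls, Fin.cases_succ, Pi.sub_apply, Fin.ext_iff]
    split_ifs <;> omega

variable (n r) in
def simpleRoots : Set (PicL r) := insert (Fcl n r) {R | ∃ k, k + 1 < r ∧ R = Fdiff r k}

lemma isSimplyLacedBase_simpleRoots (hr : n + 1 ≤ r) :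
    (bilForm n r).IsSimplyLacedBase (simpleRoots n r) where
  isSymm := isSymm_bilForm
  apply_self := by
    rintro _ (rfl | ⟨k, hk, rfl⟩)
    · exact bilForm_Fcl_Fcl hr
    · simp [Fdiff_eq hk, bilForm_Ecl_Ecl, Fin.ext_iff]
  apply_eq_zero_or_one := by
    rintro _ (rfl | ⟨k, hk, rfl⟩) _ (rfl | ⟨l, hl, rfl⟩) hne
    · exact absurd rfl hne
    · rw [isSymm_bilForm.eq]
      simp only [Fdiff_eq hl, map_sub, LinearMap.sub_apply, bilForm_Ecl_Fcl]
      split_ifs <;> omega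
    · simp only [Fdiff_eq hk, map_sub, LinearMap.sub_apply, bilForm_Ecl_Fcl]
      split_ifs <;> omega
    · have hkl : k ≠ l := by rintro rfl; exact hne rfl
      simp only [Fdiff_eq hk, Fdiff_eq hl, map_sub, LinearMap.sub_apply, bilForm_Ecl_Ecl,
        Fin.ext_iff]
      split_ifs <;> omega

lemma exists_rootReflection_of_generator {x : PicL r ≃ₗ[ℤ] PicL r}
    (hx : (∀ D, x D = reflect n r (Fcl n r) D) ∨
      ∃ k, k + 1 < r ∧ ∀ D, x D = reflect n r (Fdiff r k) D) :
    ∃ R ∈ simpleRoots n r, (x : Module.End ℤ (PicL r)) = (bilForm n r).rootReflection R := by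
  rcases hx with hx | ⟨k, hk, hx⟩
  · exact ⟨_, .inl rfl, LinearMap.ext hx⟩
  · exact ⟨_, .inr ⟨k, hk, rfl⟩, LinearMap.ext hx⟩

lemma mem_reflectionMonoid_of_mem_Wgrp (hr : n + 1 ≤ r) {w : PicL r ≃ₗ[ℤ] PicL r}
    (hw : w ∈ Wgrp n r) :
    (w : Module.End ℤ (PicL r)) ∈ (bilForm n r).reflectionMonoid (simpleRoots n r) := by
  induction hw using Subgroup.closure_induction'' with
  | mem x hx =>
    obtain ⟨R, hR, hxR⟩ := exists_rootReflection_of_generator hx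
    exact hxR ▸ LinearMap.BilinForm.rootReflection_mem_reflectionMonoid hR
  | inv_mem x hx =>
    obtain ⟨R, hR, hxR⟩ := exists_rootReflection_of_generator hx
    have hinv : x⁻¹ = x := by
      rw [inv_eq_iff_mul_eq_one]
      apply LinearEquiv.toLinearMap_injective
      change (x : Module.End ℤ (PicL r)) * x = 1
      rw [hxR, LinearMap.BilinForm.rootReflection_mul_self
        ((isSimplyLacedBase_simpleRoots hr).apply_self R hR)]
    rw [hinv, hxR]
    exact LinearMap.BilinForm.rootReflection_mem_reflectionMonoid hR
  | one => exact one_mem _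
  | mul x y _ _ hx hy => exact mul_mem hx hy

lemma rootReflection_Fdiff_Ecl {k : ℕ} (hk : k + 1 < r) :
    (bilForm n r).rootReflection (Fdiff r k) (Ecl r ⟨k + 1, hk⟩) = Ecl r ⟨k, by omega⟩ := by
  simp [Fdiff_eq hk, bilForm_Ecl_Ecl, Fin.ext_iff]

lemma exists_apply_Ecl_last (j : Fin (r + 1)) :
    ∃ g ∈ (bilForm n (r + 1)).reflectionMonoid (simpleRoots n (r + 1)),
      g (Ecl (r + 1) (Fin.last r)) = Ecl (r + 1) j := by
  induction j using Fin.reverseInduction with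
  | last => exact ⟨1, one_mem _, rfl⟩
  | cast i ih =>
    obtain ⟨g, hg, hgE⟩ := ih
    have hi : (i : ℕ) + 1 < r + 1 := by omega
    refine ⟨(bilForm n (r + 1)).rootReflection (Fdiff (r + 1) i) * g,
      mul_mem (LinearMap.BilinForm.rootReflection_mem_reflectionMonoid (.inr ⟨i, hi, rfl⟩)) hg, ?_⟩
    rw [Module.End.mul_apply, hgE]
    exact rootReflection_Fdiff_Ecl hi

lemma bilForm_Ecl_last_simpleRoots_nonneg :
    ∀ α ∈ simpleRoots n (r + 1), 0 ≤ bilForm n (r + 1) (Ecl (r + 1) (Fin.last r)) α := by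
  rintro _ (rfl | ⟨k, hk, rfl⟩)
  · rw [bilForm_Ecl_Fcl]
    split_ifs <;> omega
  · simp only [Fdiff_eq hk, map_sub, bilForm_Ecl_Ecl, Fin.ext_iff, Fin.val_last]
    split_ifs <;> omega

lemma bilForm_cls_simpleRoots_nonneg {d : ℤ} {m : Fin r → ℤ} (hmono : Antitone m)
    (hsum : (∑ i : Fin r, if (i : ℕ) < n + 1 then m i else 0) ≤ ((n : ℤ) - 1) * d) :
    ∀ α ∈ simpleRoots n r, 0 ≤ bilForm n r (cls r d m) α := by
  rintro _ (rfl | ⟨k, hk, rfl⟩)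
  · rw [bilForm_cls_Fcl]
    linarith
  · rw [Fdiff_eq hk, map_sub, bilForm_cls_Ecl, bilForm_cls_Ecl, sub_nonneg]
    exact hmono (Fin.mk_le_mk.mpr k.le_succ)

end PicL

open PicL in
theorem stmt0_general (n r : ℕ) (hr : n + 1 ≤ r)
    (d : ℤ) (m : Fin r → ℤ)
    (hmono : Antitone m) (hpos : ∀ i, 0 ≤ m i)
    (hsum : (∑ i : Fin r, if (i : ℕ) < n + 1 then m i else 0) ≤ ((n : ℤ) - 1) * d)
    (w : (PicL r) ≃ₗ[ℤ] (PicL r)) (hw : w ∈ Wgrp n r) (j : Fin r) :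
    0 ≤ bil n r (cls r d m) (w (Ecl r j)) := by
  obtain ⟨r, rfl⟩ : ∃ r', r = r' + 1 := ⟨r - 1, by omega⟩
  obtain ⟨g, hg, hgj⟩ := exists_apply_Ecl_last (n := n) j
  rw [← hgj]
  have hwg := mul_mem (mem_reflectionMonoid_of_mem_Wgrp hr hw) hg
  have hEpos : 0 ≤ bilForm n (r + 1) (cls (r + 1) d m) (Ecl (r + 1) (Fin.last r)) := by
    rw [bilForm_cls_Ecl]
    exact hpos _
  have := LinearMap.BilinForm.apply_apply_nonneg (isSimplyLacedBase_simpleRoots hr)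
    (bilForm_cls_simpleRoots_nonneg hmono hsum) bilForm_Ecl_last_simpleRoots_nonneg hEpos hwg
  exact this

/-- **Theorem 4.4.** A class in standard form has non-negative intersection with `w(E_j)`
for every `w ∈ W` and every exceptional class `E_j`. -/
theorem stmt0 (n r : ℕ) (hn : 2 ≤ n) (hr : n + 1 ≤ r)
    (d : ℤ) (m : Fin r → ℤ)
    (hdm : ∀ i, m i ≤ d) (hmono : Antitone m) (hpos : ∀ i, 0 ≤ m i)
    (hsum : (∑ i : Fin r, if (i : ℕ) < n + 1 then m i else 0) ≤ ((n : ℤ) - 1) * d)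
    (w : (PicL r) ≃ₗ[ℤ] (PicL r)) (hw : w ∈ Wgrp n r) (j : Fin r) :
    0 ≤ bil n r (cls r d m) (w (Ecl r j)) :=
  stmt0_general n r hr d m hmono hpos hsum w hw j
end

section
/- Let n ≥ 2 and r ≥ n+1 be integers, and let d, m_1, …, m_r be integers satisfying d ≥ m_1 ≥ m_2 ≥ … ≥ m_r ≥ 0, (n−1)d² − Σ_{i=1}^r m_i² = −1, and Σ_{i=1}^r m_i = (n+1)d − 1. Then (n−1)d < m_1 + m_2 + … + m_{n+1}. (This is Lemma 4.2: a (−1)-class E with E·F_i ≥ 0 and E·E_i ≥ 0 for all i satisfies E·F < 0.) -/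
open BigOperators Finset

/-
Let `a = m_{n+1}`. Every multiplicity in the first `n + 1` lies in `[a, d]` and every later
one in `[0, a]`, so termwise `mᵢ (mᵢ - a) ≤ d (mᵢ - a)` for `i ≤ n + 1` and `mᵢ (mᵢ - a) ≤ 0`
otherwise. Summing and inserting the two numerical conditions on `E` gives
`(n - 1) d² + 1 + a ≤ d (m₁ + ⋯ + m_{n+1})`, and `d > 0` because `∑ mᵢ = (n + 1) d - 1 ≥ 0`.
-/

theorem sum_sq_sub_mul_sum_le_of_threshold {ι : Type*} [Fintype ι] [DecidableEq ι]
    (T : Finset ι) (m : ι → ℤ) (a d : ℤ)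
    (hT : ∀ i ∈ T, a ≤ m i ∧ m i ≤ d) (hTc : ∀ i ∉ T, 0 ≤ m i ∧ m i ≤ a) :
    ∑ i, m i ^ 2 - a * ∑ i, m i ≤ d * (∑ i ∈ T, m i - a * #T) := by
  have htermwise : ∀ i, m i * (m i - a) ≤ if i ∈ T then d * (m i - a) else 0 := by
    intro i
    split_ifs with hi
    · exact mul_le_mul_of_nonneg_right (hT i hi).2 (sub_nonneg.2 (hT i hi).1)
    · exact mul_nonpos_of_nonneg_of_nonpos (hTc i hi).1 (sub_nonpos.2 (hTc i hi).2)
  calc ∑ i, m i ^ 2 - a * ∑ i, m i = ∑ i, m i * (m i - a) := by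
        rw [mul_sum, ← sum_sub_distrib]
        exact sum_congr rfl fun i _ => by ring
    _ ≤ ∑ i, if i ∈ T then d * (m i - a) else 0 := sum_le_sum fun i _ => htermwise i
    _ = d * (∑ i ∈ T, m i - a * #T) := by
        rw [sum_ite_mem_eq, ← mul_sum, sum_sub_distrib, sum_const, nsmul_eq_mul]
        ring

theorem stmt1_general (n r : ℕ) (hr : n + 1 ≤ r)
    (d : ℤ) (m : Fin r → ℤ)
    (hdm : ∀ i, m i ≤ d) (hmono : Antitone m) (hpos : ∀ i, 0 ≤ m i)
    (hsq : ((n : ℤ) - 1) * d ^ 2 - ∑ i : Fin r, (m i) ^ 2 = -1)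
    (hK : ∑ i : Fin r, m i = ((n : ℤ) + 1) * d - 1) :
    ((n : ℤ) - 1) * d < ∑ i : Fin r, if (i : ℕ) < n + 1 then m i else 0 := by
  set T : Finset (Fin r) := {i | (i : ℕ) < n + 1}
  set a := m ⟨n, hr⟩
  have hcard : (#T : ℤ) = n + 1 := by
    simp only [T, Fin.card_filter_val_lt, min_eq_right hr, Nat.cast_add, Nat.cast_one]
  have hd : 0 < d := by
    have : 0 ≤ ∑ i, m i := sum_nonneg fun i _ => hpos i
    nlinarith
  have hbound := sum_sq_sub_mul_sum_le_of_threshold T m a d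
    (fun i hi => ⟨hmono (Nat.lt_succ_iff.1 (by simpa [T] using hi)), hdm i⟩)
    (fun i hi => ⟨hpos i, hmono (Fin.le_def.2 (Nat.le_of_lt (by simpa [T] using hi)))⟩)
  rw [hcard, hK, show ∑ i, m i ^ 2 = ((n : ℤ) - 1) * d ^ 2 + 1 by linarith] at hbound
  have key : ((n : ℤ) - 1) * d ^ 2 + 1 + a ≤ d * ∑ i ∈ T, m i := by linarith
  rw [← sum_filter]
  exact lt_of_mul_lt_mul_left (by linarith [hpos ⟨n, hr⟩]) hd.le

/-- **Lemma 4.2.** A `(-1)`-class `E = dH - ∑ mᵢEᵢ` with decreasing non-negative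
multiplicities and `d ≥ m₁` satisfies `E·F < 0`, i.e.
`(n-1)d < m₁ + ⋯ + m_{n+1}`. -/
theorem stmt1 (n r : ℕ) (hn : 2 ≤ n) (hr : n + 1 ≤ r)
    (d : ℤ) (m : Fin r → ℤ)
    (hdm : ∀ i, m i ≤ d) (hmono : Antitone m) (hpos : ∀ i, 0 ≤ m i)
    (hsq : ((n : ℤ) - 1) * d ^ 2 - ∑ i : Fin r, (m i) ^ 2 = -1)
    (hK : ∑ i : Fin r, m i = ((n : ℤ) + 1) * d - 1) :
    ((n : ℤ) - 1) * d < ∑ i : Fin r, if (i : ℕ) < n + 1 then m i else 0 :=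
  stmt1_general n r hr d m hdm hmono hpos hsq hK
end

section
/- Let d ≥ m_1 ≥ m_2 ≥ … ≥ m_9 ≥ 0 be integers with 2d ≥ m_1 + m_2 + m_3 + m_4. In the lattice L' = ℤ^{11} (case n = 2, r = 10), let z be the class with degree δ := 2d−m_1 and multiplicity vector the decreasing rearrangement (μ_1 ≥ … ≥ μ_10) of (d−m_1, d−m_1, m_2, m_3, …, m_9). Then either z is in standard form (i.e. δ ≥ μ_1 and δ ≥ μ_1 + μ_2 + μ_3, with μ_10 ≥ 0), or the class σ_{F'}(z) is in standard form after reordering its multiplicities in decreasing order. (The case analysis proved in the Proposition of Section 6.) -/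
/-! Everything rests on one pigeonhole bound: the `k`-th largest entry of a vector is at most `B`
as soon as at most `k` entries exceed `B`. With `a = d - m₁` and `δ = d + a`, it bounds the three
largest multiplicities of `z` by `max a m₂`, `max a m₃` and `min (max a m₄) m₂`, which gives
`μ₁ + μ₂ ≤ δ` and `μ₁ + 2μ₃ ≤ δ`. If `z` is not standard, then `t = δ - μ₁ - μ₂ - μ₃ < 0`, and
these two inequalities make the multiplicities of `σ_{F'}(z)` nonnegative and bound its three
largest ones by `μ₁ + t`, `μ₂ + t`, `μ₃`, whose sum is the new degree `δ + t`. -/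

open BigOperators Finset

/-- The multiplicity vector `(d-m₁, d-m₁, m₂, …, m₉)` of the restriction `D|_Q`
written in the plane basis of `Pic(Q)` (indices are zero-based). -/
def restMult (d : ℤ) (m : Fin 9 → ℤ) : Fin 10 → ℤ :=
  fun j => if h : (j : ℕ) ≤ 1 then d - m 0
    else m ⟨(j : ℕ) - 1, by have := j.isLt; omega⟩

/-- Standard form for a plane class `δh - ∑ μᵢeᵢ` on the blow-up of `P²` at
`10` points: `δ ≥ μ₁ ≥ ⋯ ≥ μ₁₀ ≥ 0` and `δ ≥ μ₁ + μ₂ + μ₃`. -/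
def Std10 (δ : ℤ) (μ : Fin 10 → ℤ) : Prop :=
  Antitone μ ∧ μ 0 ≤ δ ∧ 0 ≤ μ 9 ∧ μ 0 + μ 1 + μ 2 ≤ δ

theorem Antitone.comp_perm_le_of_card_le {n : ℕ} {α : Type*} [Preorder α] {g : Fin n → α}
    {τ : Equiv.Perm (Fin n)} (hg : Antitone (g ∘ τ)) {s : Finset (Fin n)} {B : α}
    (hB : ∀ j ∉ s, g j ≤ B) {k : Fin n} (hk : #s ≤ k) : (g ∘ τ) k ≤ B := by
  have hcard : #s < #((Iic k).map τ.toEmbedding) := by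
    rw [card_map, Fin.card_Iic]
    omega
  obtain ⟨j, hj, hjs⟩ := exists_mem_notMem_of_card_lt_card hcard
  obtain ⟨i, hik, rfl⟩ := mem_map.1 hj
  exact (hg (mem_Iic.1 hik)).trans (hB _ hjs)

theorem std10_of_antitone {δ : ℤ} {μ : Fin 10 → ℤ} (hμ : Antitone μ) (h9 : 0 ≤ μ 9)
    (hS : μ 0 + μ 1 + μ 2 ≤ δ) : Std10 δ μ := by
  have h1 : μ 9 ≤ μ 1 := hμ (by decide)
  have h2 : μ 9 ≤ μ 2 := hμ (by decide)
  exact ⟨hμ, by linarith, h9, hS⟩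

/-- The multiplicities of `σ_{F'}(δ; μ)`, before reordering. -/
def sigmaFMult (δ : ℤ) (μ : Fin 10 → ℤ) : Fin 10 → ℤ :=
  fun j => if (j : ℕ) ≤ 2 then μ j + (δ - μ 0 - μ 1 - μ 2) else μ j

section sigmaFMult

variable {δ : ℤ} {μ : Fin 10 → ℤ}

theorem sigmaFMult_nonneg (hμ : Antitone μ) (h9 : 0 ≤ μ 9) (h01 : μ 0 + μ 1 ≤ δ)
    (j : Fin 10) : 0 ≤ sigmaFMult δ μ j := by
  unfold sigmaFMult
  split_ifs with hj
  · have : μ 2 ≤ μ j := hμ (by omega)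
    linarith
  · exact h9.trans (hμ (by omega))

theorem sigmaFMult_le_add (hμ : Antitone μ) (h02 : μ 0 + 2 * μ 2 ≤ δ) {i j : Fin 10}
    (hi : (i : ℕ) ≤ 1) (hij : i ≤ j) : sigmaFMult δ μ j ≤ μ i + (δ - μ 0 - μ 1 - μ 2) := by
  have h1i : μ 1 ≤ μ i := hμ (by omega)
  have h01 : μ 1 ≤ μ 0 := hμ (by decide)
  unfold sigmaFMult
  split_ifs with hj
  · linarith [hμ hij]
  · have : μ j ≤ μ 2 := hμ (by omega)
    linarith

theorem sigmaFMult_le_of_two_le (hμ : Antitone μ) (ht : δ ≤ μ 0 + μ 1 + μ 2) {j : Fin 10}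
    (hj : 2 ≤ (j : ℕ)) : sigmaFMult δ μ j ≤ μ 2 := by
  unfold sigmaFMult
  split_ifs with hj2
  · have : j = 2 := by omega
    subst this
    linarith
  · exact hμ (by omega)

theorem exists_std10_sigmaFMult (hμ : Antitone μ) (h9 : 0 ≤ μ 9)
    (ht : δ ≤ μ 0 + μ 1 + μ 2) (h01 : μ 0 + μ 1 ≤ δ) (h02 : μ 0 + 2 * μ 2 ≤ δ) :
    ∃ τ' : Equiv.Perm (Fin 10),
      Std10 (δ + (δ - μ 0 - μ 1 - μ 2)) (sigmaFMult δ μ ∘ τ') := by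
  set f := sigmaFMult δ μ
  set σ := Tuple.sort (OrderDual.toDual ∘ f)
  have hσ : Antitone (f ∘ σ) := Tuple.monotone_sort (OrderDual.toDual ∘ f)
  refine ⟨σ, std10_of_antitone hσ (sigmaFMult_nonneg hμ h9 h01 _) ?_⟩
  have h0 := hσ.comp_perm_le_of_card_le (s := ∅) (k := 0)
    (fun j _ => sigmaFMult_le_add hμ h02 (i := 0) zero_le_one (Fin.zero_le j)) le_rfl
  have h1 := hσ.comp_perm_le_of_card_le (s := {0}) (k := 1)
    (fun j hj => sigmaFMult_le_add hμ h02 (i := 1) le_rfl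
      (by rw [mem_singleton] at hj; omega)) le_rfl
  have h2 := hσ.comp_perm_le_of_card_le (s := {0, 1}) (k := 2)
    (fun j hj => sigmaFMult_le_of_two_le hμ ht
      (by simp only [mem_insert, mem_singleton, not_or] at hj; omega)) le_rfl
  linarith

end sigmaFMult

section restMult

variable {d : ℤ} {m : Fin 9 → ℤ}

theorem restMult_nonneg (hdm : m 0 ≤ d) (hpos : ∀ i, 0 ≤ m i) (j : Fin 10) :
    0 ≤ restMult d m j := by
  unfold restMult
  split_ifs
  · linarith
  · exact hpos _

theorem restMult_le_max (hm : Antitone m) {k : Fin 9} {j : Fin 10}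
    (hj : (j : ℕ) ≤ 1 ∨ (k : ℕ) < j) : restMult d m j ≤ max (d - m 0) (m k) := by
  unfold restMult
  split_ifs with h
  · exact le_max_left _ _
  · exact le_max_of_le_right (hm (Fin.le_def.2 (by simp only; omega)))

theorem restMult_le_of_one_lt (hm : Antitone m) {j : Fin 10} (hj : 1 < (j : ℕ)) :
    restMult d m j ≤ m 1 := by
  unfold restMult
  rw [dif_neg (by omega)]
  exact hm (Fin.le_def.2 (by simp only [Fin.val_one]; omega))

end restMult

/-- **Case analysis in the Proposition of Section 6.** Let `z` have degree
`δ = 2d - m₁` and multiplicities `μ` the decreasing rearrangement of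
`(d-m₁, d-m₁, m₂, …, m₉)`. Then either `z` is in standard form, or
`σ_{F'}(z)` is in standard form after reordering its multiplicities in
decreasing order, where `σ_{F'}` sends `(δ; μ₁,…,μ₁₀)` to
`(δ+t; μ₁+t, μ₂+t, μ₃+t, μ₄, …, μ₁₀)` with `t = δ - μ₁ - μ₂ - μ₃`. -/
theorem stmt15 (d : ℤ) (m : Fin 9 → ℤ)
    (hdm : m 0 ≤ d) (hmono : Antitone m) (hpos : ∀ i, 0 ≤ m i)
    (hstd : m 0 + m 1 + m 2 + m 3 ≤ 2 * d)
    (μ : Fin 10 → ℤ) (τ : Equiv.Perm (Fin 10))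
    (hμ : μ = restMult d m ∘ τ) (hμmono : Antitone μ) :
    Std10 (2 * d - m 0) μ ∨
    ∃ τ' : Equiv.Perm (Fin 10),
      Std10 (2 * d - m 0 + (2 * d - m 0 - μ 0 - μ 1 - μ 2))
        ((fun j : Fin 10 => if (j : ℕ) ≤ 2 then μ j + (2 * d - m 0 - μ 0 - μ 1 - μ 2)
            else μ j) ∘ τ') := by
  subst hμ
  have h9 : 0 ≤ (restMult d m ∘ τ) 9 := restMult_nonneg hdm hpos _
  have h0 := hμmono.comp_perm_le_of_card_le (s := ∅) (k := 0)
    (fun j _ => restMult_le_max hmono (k := 1) (by omega)) le_rfl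
  have h1 := hμmono.comp_perm_le_of_card_le (s := {2}) (k := 1)
    (fun j hj => restMult_le_max hmono (k := 2) (by rw [mem_singleton] at hj; omega))
    le_rfl
  have h2 := hμmono.comp_perm_le_of_card_le (s := {2, 3}) (k := 2)
    (fun j hj => restMult_le_max hmono (k := 3)
      (by simp only [mem_insert, mem_singleton, not_or] at hj; omega)) (by decide)
  have h2' := hμmono.comp_perm_le_of_card_le (s := {0, 1}) (k := 2)
    (fun j hj => restMult_le_of_one_lt hmono
      (by simp only [mem_insert, mem_singleton, not_or] at hj; omega)) (by decide)
  have hm1 : m 1 ≤ m 0 := hmono (by decide)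
  have hm2 : m 2 ≤ m 1 := hmono (by decide)
  have hm3 : m 3 ≤ m 2 := hmono (by decide)
  have hm3pos := hpos 3
  by_cases hS : (restMult d m ∘ τ) 0 + (restMult d m ∘ τ) 1 + (restMult d m ∘ τ) 2 ≤ 2 * d - m 0
  · exact .inl (std10_of_antitone hμmono h9 hS)
  · exact .inr (exists_std10_sigmaFMult hμmono h9 (by omega) (by omega) (by omega))
end
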